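/- arXiv:1510.07325 — 9 statements merged into one kernel-verified Lean document; each statement's English description precedes it below -/
import Mathlib

section
/- For every real number $a$ with $|a| < \pi/2$, one has $\min\left\{\dfrac{1-\sin a}{\pi/2 - a},\ \dfrac{1+\sin a}{\pi/2 + a}\right\} = \dfrac{1-\sin|a|}{\pi/2 - |a|}$. -/
open Real

lemma aux_key {a : ℝ} (h0 : 0 ≤ a) (h1 : a < π / 2) :
    (1 - Real.sin a) / (π / 2 - a) ≤ (1 + Real.sin a) / (π / 2 + a) := by
  have hpi := Real.pi_pos
  have hs : 2 / π * a ≤ Real.sin a := Real.mul_le_sin h0 h1.le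
  rw [div_mul_eq_mul_div, div_le_iff₀ hpi] at hs
  rw [div_le_div_iff₀ (by linarith) (by linarith)]
  nlinarith [hs]

theorem stmt_0 (a : ℝ) (ha : |a| < π / 2) :
    min ((1 - Real.sin a) / (π / 2 - a)) ((1 + Real.sin a) / (π / 2 + a)) =
      (1 - Real.sin |a|) / (π / 2 - |a|) := by
  rcases le_or_gt 0 a with h | h
  · rw [abs_of_nonneg h] at ha ⊢
    exact min_eq_left (aux_key h ha)
  · rw [abs_of_neg h] at ha ⊢
    have key := aux_key (neg_nonneg.mpr h.le) ha
    rw [Real.sin_neg, sub_neg_eq_add, sub_neg_eq_add] at key ⊢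
    simp only [← sub_eq_add_neg] at key
    exact min_eq_right key
end

section
/- Let $x, y$ be real numbers with $|x| \le \pi/2$ and $|y| < \pi/2$, and set $g = \dfrac{1-\sin|y|}{\pi/2 - |y|}$. Then $g\,(x-y)^2 \le (x-y)(\sin x - \sin y) \le (x-y)^2$. -/
open Real

private lemma key_lemma (x y : ℝ) (hx1 : -(π / 2) ≤ x) (hx2 : x ≤ π / 2)
    (hy1 : 0 ≤ y) (hy2 : y < π / 2) :
    (1 - Real.sin y) / (π / 2 - y) * (x - y) ^ 2 ≤ (x - y) * (Real.sin x - Real.sin y) := by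
  have hpi : (0:ℝ) < π := Real.pi_pos
  have hden : 0 < π / 2 - y := by linarith
  have hjy : 2 / π * y ≤ Real.sin y := Real.mul_le_sin hy1 (le_of_lt hy2)
  have h2y : 2 * y ≤ Real.sin y * π := by
    have := hjy
    rw [div_mul_eq_mul_div, div_le_iff₀ hpi] at this
    linarith
  have hsy1 : Real.sin y ≤ 1 := Real.sin_le_one y
  rcases le_or_gt y x with hxy | hxy
  · -- x ≥ y : concavity chord from y to π/2
    rcases eq_or_lt_of_le hxy with h | hxy'
    · subst h; simp
    set t : ℝ := (x - y) / (π / 2 - y) with htdef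
    have ht0 : 0 < t := div_pos (by linarith) hden
    have ht1 : t ≤ 1 := by
      rw [htdef, div_le_one hden]; linarith
    have htm : t * (π / 2 - y) = x - y := by
      rw [htdef, div_mul_cancel₀]; exact hden.ne'
    have hx_eq : (1 - t) * y + t * (π / 2) = x := by linarith
    have hconc := strictConcaveOn_sin_Icc.concaveOn.2
      (show y ∈ Set.Icc 0 π from Set.mem_Icc.2 ⟨hy1, by linarith⟩)
      (show (π / 2 : ℝ) ∈ Set.Icc 0 π from Set.mem_Icc.2 ⟨by linarith, by linarith⟩)
      (by linarith : (0:ℝ) ≤ 1 - t) (le_of_lt ht0) (by ring)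
    rw [smul_eq_mul, smul_eq_mul, smul_eq_mul, smul_eq_mul, hx_eq,
      Real.sin_pi_div_two] at hconc
    -- hconc : (1 - t) * sin y + t * 1 ≤ sin x
    have hkey : (1 - Real.sin y) / (π / 2 - y) * (x - y) ≤ Real.sin x - Real.sin y := by
      have heq : (1 - Real.sin y) / (π / 2 - y) * (x - y) = t * (1 - Real.sin y) := by
        rw [htdef]; ring
      rw [heq]; nlinarith
    have hxy0 : 0 ≤ x - y := by linarith
    calc (1 - Real.sin y) / (π / 2 - y) * (x - y) ^ 2
        = ((1 - Real.sin y) / (π / 2 - y) * (x - y)) * (x - y) := by ring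
      _ ≤ (Real.sin x - Real.sin y) * (x - y) :=
          mul_le_mul_of_nonneg_right hkey hxy0
      _ = (x - y) * (Real.sin x - Real.sin y) := by ring
  · -- x < y
    have hkey : (1 - Real.sin y) / (π / 2 - y) * (y - x) ≤ Real.sin y - Real.sin x := by
      rcases le_or_gt 0 x with hx0 | hx0
      · -- 0 ≤ x < y : concavity at y between x and π/2
        have hdx : 0 < π / 2 - x := by linarith
        set s : ℝ := (y - x) / (π / 2 - x) with hsdef
        have hs0 : 0 < s := div_pos (by linarith) hdx
        have hs1 : s ≤ 1 := by rw [hsdef, div_le_one hdx]; linarith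
        have hsm : s * (π / 2 - x) = y - x := by
          rw [hsdef, div_mul_cancel₀]; exact hdx.ne'
        have hy_eq : (1 - s) * x + s * (π / 2) = y := by linarith
        have hconc := strictConcaveOn_sin_Icc.concaveOn.2
          (show x ∈ Set.Icc 0 π from Set.mem_Icc.2 ⟨hx0, by linarith⟩)
          (show (π / 2 : ℝ) ∈ Set.Icc 0 π from Set.mem_Icc.2 ⟨by linarith, by linarith⟩)
          (by linarith : (0:ℝ) ≤ 1 - s) (le_of_lt hs0) (by ring)
        rw [smul_eq_mul, smul_eq_mul, smul_eq_mul, smul_eq_mul, hy_eq,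
          Real.sin_pi_div_two] at hconc
        -- hconc : (1 - s) * sin x + s * 1 ≤ sin y
        have hC : (π / 2 - y) * Real.sin x + (y - x) ≤ Real.sin y * (π / 2 - x) := by
          have hh := mul_le_mul_of_nonneg_right hconc (le_of_lt hdx)
          have hsm2 : s * (π / 2 - x) * Real.sin x = (y - x) * Real.sin x := by rw [hsm]
          nlinarith [hh, hsm, hsm2]
        rw [div_mul_eq_mul_div, div_le_iff₀ hden]
        nlinarith [hC]
      · -- x < 0 ≤ y : use Jordan both sides
        have hjx : 2 / π * (-x) ≤ Real.sin (-x) :=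
          Real.mul_le_sin (by linarith) (by linarith)
        rw [Real.sin_neg] at hjx
        have hg2 : (1 - Real.sin y) / (π / 2 - y) ≤ 2 / π := by
          rw [div_le_div_iff₀ hden hpi]
          nlinarith [h2y]
        have hyx : 0 < y - x := by linarith
        calc (1 - Real.sin y) / (π / 2 - y) * (y - x) ≤ 2 / π * (y - x) :=
              mul_le_mul_of_nonneg_right hg2 (le_of_lt hyx)
          _ = 2 / π * y + 2 / π * (-x) := by ring
          _ ≤ Real.sin y - Real.sin x := by linarith
    have hxy0 : 0 ≤ y - x := by linarith
    have hmul := mul_le_mul_of_nonneg_right hkey hxy0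
    nlinarith [hmul]

theorem stmt_2 (x y : ℝ) (hx : |x| ≤ π / 2) (hy : |y| < π / 2)
    (g : ℝ) (hg : g = (1 - Real.sin |y|) / (π / 2 - |y|)) :
    g * (x - y) ^ 2 ≤ (x - y) * (Real.sin x - Real.sin y) ∧
      (x - y) * (Real.sin x - Real.sin y) ≤ (x - y) ^ 2 := by
  have hx1 := abs_le.1 hx
  have hy1 := abs_lt.1 hy
  constructor
  · rcases le_or_gt 0 y with h0 | h0
    · rw [hg, abs_of_nonneg h0]
      exact key_lemma x y hx1.1 hx1.2 h0 hy1.2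
    · rw [hg, abs_of_neg h0, Real.sin_neg]
      have hk := key_lemma (-x) (-y) (by linarith) (by linarith) (by linarith) (by linarith)
      rw [Real.sin_neg, Real.sin_neg] at hk
      have e1 : (-x - -y) ^ 2 = (x - y) ^ 2 := by ring
      have e2 : (-x - -y) * (-Real.sin x - -Real.sin y)
          = (x - y) * (Real.sin x - Real.sin y) := by ring
      rw [e1, e2] at hk
      exact hk
  · have h1 : |Real.sin x - Real.sin y| ≤ |x - y| := by
      rw [Real.sin_sub_sin]
      calc |2 * Real.sin ((x - y) / 2) * Real.cos ((x + y) / 2)|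
          = 2 * |Real.sin ((x - y) / 2)| * |Real.cos ((x + y) / 2)| := by
            rw [abs_mul, abs_mul]; simp [abs_of_nonneg]
        _ ≤ 2 * |(x - y) / 2| * 1 := by
            apply mul_le_mul
            · exact mul_le_mul_of_nonneg_left (Real.abs_sin_le_abs) (by norm_num)
            · exact Real.abs_cos_le_one _
            · positivity
            · positivity
        _ = |x - y| := by rw [abs_div, abs_two]; ring
    calc (x - y) * (Real.sin x - Real.sin y) ≤ |x - y| * |Real.sin x - Real.sin y| := by
          rw [← abs_mul]; exact le_abs_self _
      _ ≤ |x - y| * |x - y| := mul_le_mul_of_nonneg_left h1 (abs_nonneg _)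
      _ = (x - y) ^ 2 := by rw [← sq_abs (x - y)]; ring
end

section
/- Let $m$ be a natural number, $\gamma \in [0, \pi/2)$, and set $g = \dfrac{1-\sin\gamma}{\pi/2 - \gamma}$. Let $\delta, \delta^* \in \mathbb{R}^m$ satisfy $|\delta_i| \le \pi/2$ and $|\delta_i^*| \le \gamma$ for every $i$. Then $\sum_{i=1}^m \big(\sin\delta_i - \sin\delta_i^* - g(\delta_i - \delta_i^*)\big)\big(\sin\delta_i - \sin\delta_i^* - (\delta_i - \delta_i^*)\big) \le 0$. -/
open Real

/-- 1-Lipschitz bound for sine. -/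
lemma aux_sin_lip (x y : ℝ) : |Real.sin x - Real.sin y| ≤ |x - y| := by
  rw [Real.sin_sub_sin]
  calc |2 * Real.sin ((x - y) / 2) * Real.cos ((x + y) / 2)|
      = 2 * |Real.sin ((x - y) / 2)| * |Real.cos ((x + y) / 2)| := by
        rw [abs_mul, abs_mul]; norm_num
    _ ≤ 2 * |(x - y) / 2| * 1 := by
        apply mul_le_mul
        · exact mul_le_mul_of_nonneg_left (Real.abs_sin_le_abs) (by norm_num)
        · exact Real.abs_cos_le_one _
        · positivity
        · positivity
    _ = |x - y| := by rw [abs_div, abs_two]; ring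

/-- The chord-slope estimate: g < cos γ. -/
lemma aux_g_lt_cos (γ : ℝ) (hγ : γ ∈ Set.Ico 0 (π / 2)) :
    (1 - Real.sin γ) / (π / 2 - γ) < Real.cos γ := by
  obtain ⟨hγ0, hγπ⟩ := hγ
  have hsub : (0:ℝ) < π / 2 - γ := by linarith
  rw [div_lt_iff₀ hsub]
  -- show 1 - sin γ < cos γ * (π/2 - γ) via strict antitonicity of φ
  set φ : ℝ → ℝ := fun t => Real.cos t * (π / 2 - t) + Real.sin t with hφ
  have hderiv : ∀ t : ℝ, HasDerivAt φ (-Real.sin t * (π / 2 - t)) t := by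
    intro t
    have h1 : HasDerivAt (fun t : ℝ => Real.cos t * (π / 2 - t))
        (-Real.sin t * (π / 2 - t) + Real.cos t * (0 - 1)) t :=
      (Real.hasDerivAt_cos t).mul ((hasDerivAt_const t (π/2)).sub (hasDerivAt_id t))
    have := h1.add (Real.hasDerivAt_sin t)
    refine this.congr_deriv ?_
    ring
  have hanti : StrictAntiOn φ (Set.Icc 0 (π / 2)) := by
    apply strictAntiOn_of_deriv_neg (convex_Icc _ _)
    · exact (Real.continuous_cos.mul (continuous_const.sub continuous_id)).add
        Real.continuous_sin |>.continuousOn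
    · intro t ht
      rw [interior_Icc] at ht
      rw [(hderiv t).deriv]
      have hs : 0 < Real.sin t := Real.sin_pos_of_pos_of_lt_pi ht.1
        (lt_trans ht.2 (by linarith [Real.pi_pos]))
      nlinarith [ht.2]
  have key : φ (π / 2) < φ γ := by
    apply hanti ⟨hγ0, hγπ.le⟩ ⟨by positivity, le_refl _⟩ hγπ
  simp only [hφ, Real.sin_pi_div_two, Real.cos_pi_div_two] at key
  nlinarith [key]

/-- f(t) = sin t - g t is monotone on [-γ, γ]. -/
lemma aux_mono (γ : ℝ) (hγ : γ ∈ Set.Ico 0 (π / 2))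
    (g : ℝ) (hg : g = (1 - Real.sin γ) / (π / 2 - γ))
    {y t : ℝ} (hy : |y| ≤ γ) (ht : |t| ≤ γ) (hyt : y ≤ t) :
    Real.sin y - g * y ≤ Real.sin t - g * t := by
  obtain ⟨hγ0, hγπ⟩ := hγ
  have hgc : g < Real.cos γ := hg ▸ aux_g_lt_cos γ ⟨hγ0, hγπ⟩
  rcases eq_or_lt_of_le hyt with rfl | hlt
  · exact le_rfl
  have hmono : StrictMonoOn (fun t => Real.sin t - g * t) (Set.Icc (-γ) γ) := by
    apply strictMonoOn_of_deriv_pos (convex_Icc _ _)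
    · exact (Real.continuous_sin.sub (continuous_const.mul continuous_id)).continuousOn
    · intro s hs
      rw [interior_Icc] at hs
      have hd : HasDerivAt (fun t => Real.sin t - g * t) (Real.cos s - g * 1) s :=
        (Real.hasDerivAt_sin s).sub ((hasDerivAt_id s).const_mul g)
      rw [hd.deriv]
      have : Real.cos γ ≤ Real.cos s := by
        rw [← Real.cos_abs s]
        apply Real.cos_le_cos_of_nonneg_of_le_pi (abs_nonneg s)
          (by linarith [Real.pi_pos])
        calc |s| ≤ γ := abs_le.mpr ⟨hs.1.le, hs.2.le⟩
          _ ≤ γ := le_refl _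
      nlinarith
  exact (hmono (abs_le.mp hy |> fun h => ⟨h.1, h.2⟩)
    (abs_le.mp ht |> fun h => ⟨h.1, h.2⟩) hlt).le

/-- Concavity step: for x ∈ [γ, π/2], sin x - sin γ ≥ g (x - γ). -/
lemma aux_concave (γ : ℝ) (hγ : γ ∈ Set.Ico 0 (π / 2))
    (g : ℝ) (hg : g = (1 - Real.sin γ) / (π / 2 - γ))
    {x : ℝ} (hx1 : γ ≤ x) (hx2 : x ≤ π / 2) :
    g * (x - γ) ≤ Real.sin x - Real.sin γ := by
  obtain ⟨hγ0, hγπ⟩ := hγ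
  have hsub : (0:ℝ) < π / 2 - γ := by linarith
  set b : ℝ := (x - γ) / (π / 2 - γ) with hb
  set a : ℝ := 1 - b with ha
  have hb0 : 0 ≤ b := div_nonneg (by linarith) hsub.le
  have hb1 : b ≤ 1 := by rw [hb, div_le_one hsub]; linarith
  have ha0 : 0 ≤ a := by linarith
  have hab : a + b = 1 := by ring
  have hbx : b * (π / 2 - γ) = x - γ := by
    rw [hb, div_mul_cancel₀ _ hsub.ne']
  have hcomb : a * γ + b * (π / 2) = x := by
    rw [ha]; linear_combination hbx
  have hmem1 : γ ∈ Set.Icc (0:ℝ) π := Set.mem_Icc.mpr ⟨hγ0, by linarith [Real.pi_pos]⟩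
  have hmem2 : π / 2 ∈ Set.Icc (0:ℝ) π := Set.mem_Icc.mpr ⟨by positivity, by linarith [Real.pi_pos]⟩
  have hconc := strictConcaveOn_sin_Icc.concaveOn.2 hmem1 hmem2 ha0 hb0 hab
  simp only [smul_eq_mul, hcomb, Real.sin_pi_div_two, mul_one] at hconc
  have hgb : g * (x - γ) = b * (1 - Real.sin γ) := by
    rw [hg, hb]; field_simp
  rw [hgb]
  simp only [ha] at hconc
  nlinarith [hconc]

/-- Key lemma: for |x| ≤ π/2, |y| ≤ γ, y ≤ x, we have sin x - sin y ≥ g (x - y). -/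
lemma aux_key_s4 (γ : ℝ) (hγ : γ ∈ Set.Ico 0 (π / 2))
    (g : ℝ) (hg : g = (1 - Real.sin γ) / (π / 2 - γ))
    {x y : ℝ} (hx : |x| ≤ π / 2) (hy : |y| ≤ γ) (hyx : y ≤ x) :
    g * (x - y) ≤ Real.sin x - Real.sin y := by
  rcases le_or_gt x γ with hxγ | hxγ
  · -- x ∈ [y, γ] ⊆ [-γ, γ]
    have hxa : |x| ≤ γ := abs_le.mpr ⟨by
      have := (abs_le.mp hy).1; linarith, hxγ⟩
    have := aux_mono γ hγ g hg hy hxa hyx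
    linarith
  · -- split at γ
    have h1 := aux_concave γ hγ g hg hxγ.le ((abs_le.mp hx).2)
    have h2 := aux_mono γ hγ g hg hy (by
      rw [abs_of_nonneg hγ.1]) ((abs_le.mp hy).2.trans (le_refl γ))
    linarith

theorem stmt_4 (m : ℕ) (γ : ℝ) (hγ : γ ∈ Set.Ico 0 (π / 2))
    (g : ℝ) (hg : g = (1 - Real.sin γ) / (π / 2 - γ))
    (δ δs : Fin m → ℝ)
    (hδ : ∀ i, |δ i| ≤ π / 2) (hδs : ∀ i, |δs i| ≤ γ) :
    ∑ i, (Real.sin (δ i) - Real.sin (δs i) - g * (δ i - δs i)) *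
        (Real.sin (δ i) - Real.sin (δs i) - (δ i - δs i)) ≤ 0 := by
  apply Finset.sum_nonpos
  intro i _
  set x := δ i with hxdef
  set y := δs i with hydef
  have hx := hδ i
  have hy := hδs i
  rcases le_total y x with hyx | hxy
  · -- D ≥ 0 : sin x - sin y ∈ [g(x-y), x-y]
    have hlow := aux_key_s4 γ hγ g hg hx hy hyx
    have hup : Real.sin x - Real.sin y ≤ x - y := by
      have := aux_sin_lip x y
      have h2 := le_of_abs_le this
      rwa [abs_of_nonneg (by linarith : (0:ℝ) ≤ x - y)] at h2
    exact mul_nonpos_of_nonneg_of_nonpos (by linarith) (by linarith)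
  · -- D ≤ 0 : apply key lemma to (-x, -y)
    have hx' : |(-x)| ≤ π / 2 := by rwa [abs_neg]
    have hy' : |(-y)| ≤ γ := by rwa [abs_neg]
    have hlow := aux_key_s4 γ hγ g hg hx' hy' (by linarith)
    rw [Real.sin_neg, Real.sin_neg] at hlow
    have hup : y - x ≥ Real.sin y - Real.sin x := by
      have := aux_sin_lip y x
      have h2 := le_of_abs_le this
      rwa [abs_of_nonneg (by linarith : (0:ℝ) ≤ y - x)] at h2
    exact mul_nonpos_of_nonpos_of_nonneg (by linarith) (by linarith)
end

section
/- Let $n, m$ be natural numbers, $A \in \mathbb{R}^{n\times n}$, $B \in \mathbb{R}^{n\times m}$, $C \in \mathbb{R}^{m\times n}$, let $P \in \mathbb{R}^{n\times n}$ be symmetric, and let $g \in \mathbb{R}$. Define $R = B^T P - \frac{1+g}{2} C$. Then for all $x \in \mathbb{R}^n$ and $F \in \mathbb{R}^m$, setting $S = F + Rx$ and $W = (F - gCx)\cdot(F - Cx)$, the following identity holds: $x^T(A^TP + PA)x - 2\,x^T P B F = W - \|S\|^2 + x^T\big(A^TP + PA - g\,C^TC + R^TR\big)x$. -/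
open Matrix

lemma aux_key_s5 {k l : ℕ} (M : Matrix (Fin k) (Fin l) ℝ) (u : Fin k → ℝ) (v : Fin l → ℝ) :
    u ⬝ᵥ M.mulVec v = Mᵀ.mulVec u ⬝ᵥ v := by
  rw [Matrix.dotProduct_mulVec, ← Matrix.vecMul_transpose, Matrix.transpose_transpose]

theorem stmt_5 (n m : ℕ)
    (A P : Matrix (Fin n) (Fin n) ℝ) (B : Matrix (Fin n) (Fin m) ℝ)
    (C : Matrix (Fin m) (Fin n) ℝ) (hP : P.IsSymm) (g : ℝ)
    (R : Matrix (Fin m) (Fin n) ℝ) (hR : R = Bᵀ * P - ((1 + g) / 2) • C)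
    (x : Fin n → ℝ) (F : Fin m → ℝ)
    (S : Fin m → ℝ) (hS : S = F + R.mulVec x)
    (W : ℝ) (hW : W = (F - g • C.mulVec x) ⬝ᵥ (F - C.mulVec x)) :
    x ⬝ᵥ (Aᵀ * P + P * A).mulVec x - 2 * (x ⬝ᵥ (P * B).mulVec F) =
      W - S ⬝ᵥ S + x ⬝ᵥ (Aᵀ * P + P * A - g • (Cᵀ * C) + Rᵀ * R).mulVec x := by
  subst hS hW
  have h1 : x ⬝ᵥ (Rᵀ * R).mulVec x = R.mulVec x ⬝ᵥ R.mulVec x := by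
    rw [← Matrix.mulVec_mulVec, aux_key_s5, Matrix.transpose_transpose]
  have h2 : x ⬝ᵥ (g • (Cᵀ * C)).mulVec x = g * (C.mulVec x ⬝ᵥ C.mulVec x) := by
    rw [Matrix.smul_mulVec, dotProduct_smul, ← Matrix.mulVec_mulVec, aux_key_s5,
      Matrix.transpose_transpose, smul_eq_mul]
  have h3 : x ⬝ᵥ (P * B).mulVec F = Bᵀ.mulVec (P.mulVec x) ⬝ᵥ F := by
    rw [← Matrix.mulVec_mulVec, ← hP.eq, aux_key_s5, Matrix.transpose_transpose, aux_key_s5, hP.eq]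
  have h4 : R.mulVec x = Bᵀ.mulVec (P.mulVec x) - ((1 + g) / 2) • C.mulVec x := by
    rw [hR, Matrix.sub_mulVec, Matrix.smul_mulVec, Matrix.mulVec_mulVec]
  simp only [Matrix.add_mulVec, Matrix.sub_mulVec, dotProduct_add, dotProduct_sub]
  rw [h1, h2, h3, h4]
  generalize Bᵀ.mulVec (P.mulVec x) = p
  generalize C.mulVec x = c
  generalize hq : x ⬝ᵥ (Aᵀ * P).mulVec x + x ⬝ᵥ (P * A).mulVec x = q
  simp only [dotProduct_add, dotProduct_sub, add_dotProduct, sub_dotProduct,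
    dotProduct_smul, smul_dotProduct, smul_eq_mul, dotProduct_comm c F,
    dotProduct_comm p F, dotProduct_comm c p]
  ring
end

section
/- Let $n, m$ be natural numbers, $A \in \mathbb{R}^{n\times n}$, $B \in \mathbb{R}^{n\times m}$, $C \in \mathbb{R}^{m\times n}$, let $P \in \mathbb{R}^{n\times n}$ be symmetric, and let $g \in \mathbb{R}$. Define $\bar A = A - \frac{1+g}{2}BC$ and suppose the matrix $\bar A^T P + P \bar A + \frac{(1-g)^2}{4} C^T C + P B B^T P$ is negative semidefinite. Then for every $x \in \mathbb{R}^n$ and $F \in \mathbb{R}^m$ satisfying the sector condition $(F - gCx)\cdot(F - Cx) \le 0$, one has $2\,x^T P (Ax - BF) \le -\big\|F + (B^TP - \tfrac{1+g}{2}C)x\big\|^2 \le 0$. -/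
open Matrix

theorem stmt_8 (n m : ℕ)
    (A P : Matrix (Fin n) (Fin n) ℝ) (B : Matrix (Fin n) (Fin m) ℝ)
    (C : Matrix (Fin m) (Fin n) ℝ) (hP : P.IsSymm) (g : ℝ)
    (Abar : Matrix (Fin n) (Fin n) ℝ) (hAbar : Abar = A - ((1 + g) / 2) • (B * C))
    (hQ : (-(Abarᵀ * P + P * Abar + ((1 - g) ^ 2 / 4) • (Cᵀ * C) + P * B * Bᵀ * P)).PosSemidef)
    (x : Fin n → ℝ) (F : Fin m → ℝ)
    (hsec : (F - g • C.mulVec x) ⬝ᵥ (F - C.mulVec x) ≤ 0) :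
    2 * (x ⬝ᵥ P.mulVec (A.mulVec x - B.mulVec F)) ≤
        -((F + (Bᵀ * P - ((1 + g) / 2) • C).mulVec x) ⬝ᵥ
          (F + (Bᵀ * P - ((1 + g) / 2) • C).mulVec x)) ∧
      -((F + (Bᵀ * P - ((1 + g) / 2) • C).mulVec x) ⬝ᵥ
          (F + (Bᵀ * P - ((1 + g) / 2) • C).mulVec x)) ≤ 0 := by
  have hx := hQ.dotProduct_mulVec_nonneg x
  set c : ℝ := (1 + g) / 2 with hc
  set u := C.mulVec x with hu
  set p := P.mulVec x with hp
  set y := Bᵀ.mulVec p with hy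
  have hPdot : ∀ w, x ⬝ᵥ P.mulVec w = p ⬝ᵥ w := fun w => by
    rw [dotProduct_mulVec, ← mulVec_transpose, hP]
  have ev : (Bᵀ * P - c • C).mulVec x = y - c • u := by
    rw [sub_mulVec, smul_mulVec, ← mulVec_mulVec]
  have hQle : x ⬝ᵥ (Abarᵀ * P + P * Abar + ((1 - g) ^ 2 / 4) • (Cᵀ * C) + P * B * Bᵀ * P).mulVec x ≤ 0 := by
    have : (0:ℝ) ≤ x ⬝ᵥ (-(Abarᵀ * P + P * Abar + ((1 - g) ^ 2 / 4) • (Cᵀ * C) + P * B * Bᵀ * P)).mulVec x := by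
      simpa using hx
    rw [neg_mulVec, dotProduct_neg] at this
    linarith
  have eAbar : Abar.mulVec x = A.mulVec x - c • B.mulVec u := by
    rw [hAbar, sub_mulVec, smul_mulVec, ← mulVec_mulVec]
  have e5 : ∀ w : Fin m → ℝ, p ⬝ᵥ B.mulVec w = y ⬝ᵥ w := fun w => by
    rw [dotProduct_mulVec, ← mulVec_transpose]
  have e1 : x ⬝ᵥ (Abarᵀ * P).mulVec x = Abar.mulVec x ⬝ᵥ p := by
    rw [← mulVec_mulVec, dotProduct_mulVec, ← mulVec_transpose, transpose_transpose]
  have e2 : x ⬝ᵥ (P * Abar).mulVec x = p ⬝ᵥ Abar.mulVec x := by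
    rw [← mulVec_mulVec, hPdot]
  have e3 : x ⬝ᵥ (((1 - g) ^ 2 / 4) • (Cᵀ * C)).mulVec x = ((1 - g) ^ 2 / 4) * (u ⬝ᵥ u) := by
    rw [smul_mulVec, dotProduct_smul, ← mulVec_mulVec, dotProduct_mulVec,
      ← mulVec_transpose, transpose_transpose]
    rfl
  have e4 : x ⬝ᵥ (P * B * Bᵀ * P).mulVec x = y ⬝ᵥ y := by
    rw [Matrix.mul_assoc, Matrix.mul_assoc, ← mulVec_mulVec, hPdot, ← mulVec_mulVec, e5,
      ← mulVec_mulVec]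
  have hAbp : p ⬝ᵥ Abar.mulVec x = p ⬝ᵥ A.mulVec x - c * (y ⬝ᵥ u) := by
    rw [eAbar, dotProduct_sub, dotProduct_smul, e5, smul_eq_mul]
  have hAbp' : Abar.mulVec x ⬝ᵥ p = p ⬝ᵥ A.mulVec x - c * (y ⬝ᵥ u) := by
    rw [dotProduct_comm, hAbp]
  have hLHS : x ⬝ᵥ P.mulVec (A.mulVec x - B.mulVec F) = p ⬝ᵥ A.mulVec x - y ⬝ᵥ F := by
    rw [hPdot, dotProduct_sub, e5]
  -- scalar expansions
  have Eq1 : x ⬝ᵥ (Abarᵀ * P + P * Abar + ((1 - g) ^ 2 / 4) • (Cᵀ * C) + P * B * Bᵀ * P).mulVec x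
      = 2 * (p ⬝ᵥ A.mulVec x) - 2 * c * (y ⬝ᵥ u) + ((1 - g) ^ 2 / 4) * (u ⬝ᵥ u) + y ⬝ᵥ y := by
    simp only [add_mulVec, dotProduct_add, e1, e2, e3, e4, hAbp, hAbp']
    ring
  have h1 : u ⬝ᵥ F = F ⬝ᵥ u := dotProduct_comm _ _
  have h2 : F ⬝ᵥ y = y ⬝ᵥ F := dotProduct_comm _ _
  have h3 : u ⬝ᵥ y = y ⬝ᵥ u := dotProduct_comm _ _
  have Eq2 : (F - g • u) ⬝ᵥ (F - u) = F ⬝ᵥ F - (1 + g) * (F ⬝ᵥ u) + g * (u ⬝ᵥ u) := by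
    simp only [sub_dotProduct, dotProduct_sub, smul_dotProduct, dotProduct_smul, smul_eq_mul,
      h1]
    ring
  have Eq3 : (F + (y - c • u)) ⬝ᵥ (F + (y - c • u)) =
      F ⬝ᵥ F + y ⬝ᵥ y + c ^ 2 * (u ⬝ᵥ u) + 2 * (y ⬝ᵥ F) - 2 * c * (F ⬝ᵥ u)
        - 2 * c * (y ⬝ᵥ u) := by
    simp only [add_dotProduct, dotProduct_add, sub_dotProduct, dotProduct_sub,
      smul_dotProduct, dotProduct_smul, smul_eq_mul, h1, h2, h3]
    ring
  have key : 2 * (p ⬝ᵥ A.mulVec x - y ⬝ᵥ F) =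
      x ⬝ᵥ (Abarᵀ * P + P * Abar + ((1 - g) ^ 2 / 4) • (Cᵀ * C) + P * B * Bᵀ * P).mulVec x
        + (F - g • u) ⬝ᵥ (F - u)
        - (F + (y - c • u)) ⬝ᵥ (F + (y - c • u)) := by
    rw [Eq1, Eq2, Eq3, hc]
    ring
  have h0 : 0 ≤ (F + (y - c • u)) ⬝ᵥ (F + (y - c • u)) :=
    Finset.sum_nonneg fun i _ => mul_self_nonneg _
  rw [hLHS, ev]
  exact ⟨by rw [key]; linarith, by linarith⟩
end

section
/- Let $n, m$ be natural numbers, $A \in \mathbb{R}^{n\times n}$, $B \in \mathbb{R}^{n\times m}$, $C \in \mathbb{R}^{m\times n}$, $D \in \mathbb{R}^m$, let $P \in \mathbb{R}^{n\times n}$ be symmetric, let $g \in \mathbb{R}$ and $\mu > 0$. Define $\bar A = A - \frac{1+g}{2}BC$ and suppose the matrix $\tilde Q = \bar A^T P + P \bar A + \frac{(1-g)^2}{4} C^T C + P B B^T P + \mu\, P B D D^T B^T P$ is negative semidefinite. Then for every $x \in \mathbb{R}^n$, every $F \in \mathbb{R}^m$ satisfying $(F - gCx)\cdot(F - Cx)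 \le 0$, and every real $s$ with $|s| \le 1$, one has $2\,x^T P (Ax - BF + BDs) \le \dfrac{s^2}{\mu} \le \dfrac{1}{\mu}$. -/
open Matrix

private lemma vecMulVec_mulVec' {m : ℕ} (D v : Fin m → ℝ) :
    (Matrix.vecMulVec D D).mulVec v = (D ⬝ᵥ v) • D := by
  ext i
  simp [Matrix.vecMulVec, Matrix.mulVec, dotProduct, Finset.mul_sum, mul_comm,
    mul_left_comm]

private lemma dot_self_nonneg' {m : ℕ} (v : Fin m → ℝ) : 0 ≤ v ⬝ᵥ v :=
  Finset.sum_nonneg fun i _ => mul_self_nonneg (v i)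

theorem stmt_9 (n m : ℕ)
    (A P : Matrix (Fin n) (Fin n) ℝ) (B : Matrix (Fin n) (Fin m) ℝ)
    (C : Matrix (Fin m) (Fin n) ℝ) (D : Fin m → ℝ) (hP : P.IsSymm)
    (g μ : ℝ) (hμ : 0 < μ)
    (Abar : Matrix (Fin n) (Fin n) ℝ) (hAbar : Abar = A - ((1 + g) / 2) • (B * C))
    (hQ : (-(Abarᵀ * P + P * Abar + ((1 - g) ^ 2 / 4) • (Cᵀ * C) + P * B * Bᵀ * P +
        μ • (P * B * Matrix.vecMulVec D D * Bᵀ * P))).PosSemidef)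
    (x : Fin n → ℝ) (F : Fin m → ℝ)
    (hsec : (F - g • C.mulVec x) ⬝ᵥ (F - C.mulVec x) ≤ 0)
    (s : ℝ) (hs : |s| ≤ 1) :
    2 * (x ⬝ᵥ P.mulVec (A.mulVec x - B.mulVec F + s • B.mulVec D)) ≤ s ^ 2 / μ ∧
      s ^ 2 / μ ≤ 1 / μ := by
  subst hAbar
  have hs2 : s ^ 2 ≤ 1 := by
    have := abs_nonneg s
    nlinarith [sq_abs s]
  refine ⟨?_, by
    rw [div_le_div_iff₀ hμ hμ]; nlinarith⟩
  set p := P.mulVec x with hp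
  have hPdot : ∀ v, x ⬝ᵥ P.mulVec v = p ⬝ᵥ v := by
    intro v
    rw [Matrix.dotProduct_mulVec, ← Matrix.mulVec_transpose, hP.eq]
  set w := Bᵀ.mulVec p with hw
  set y := C.mulVec x with hy
  have hBdot : ∀ v : Fin m → ℝ, p ⬝ᵥ B.mulVec v = w ⬝ᵥ v := by
    intro v
    rw [Matrix.dotProduct_mulVec, ← Matrix.mulVec_transpose]
  -- expand PSD hypothesis
  have hq := hQ.dotProduct_mulVec_nonneg x
  rw [Matrix.neg_mulVec, dotProduct_neg, neg_nonneg] at hq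
  have hQx : x ⬝ᵥ ((A - ((1 + g) / 2) • (B * C))ᵀ * P + P * (A - ((1 + g) / 2) • (B * C)) +
      ((1 - g) ^ 2 / 4) • (Cᵀ * C) + P * B * Bᵀ * P +
      μ • (P * B * Matrix.vecMulVec D D * Bᵀ * P)).mulVec x
      = 2 * (p ⬝ᵥ A.mulVec x) - (1 + g) * (w ⬝ᵥ y)
        + ((1 - g) ^ 2 / 4) * (y ⬝ᵥ y) + w ⬝ᵥ w + μ * (w ⬝ᵥ D) ^ 2 := by
    simp only [Matrix.add_mulVec, dotProduct_add, Matrix.smul_mulVec,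
      dotProduct_smul, ← Matrix.mulVec_mulVec]
    rw [show ∀ v : Fin n → ℝ, x ⬝ᵥ (A - ((1 + g) / 2) • (B * C))ᵀ.mulVec v
        = ((A - ((1 + g) / 2) • (B * C)).mulVec x) ⬝ᵥ v from fun v => by
      rw [Matrix.dotProduct_mulVec, ← Matrix.mulVec_transpose, transpose_transpose]]
    rw [show x ⬝ᵥ Cᵀ.mulVec (C.mulVec x) = y ⬝ᵥ y from by
      rw [Matrix.dotProduct_mulVec, ← Matrix.mulVec_transpose, transpose_transpose]]
    simp only [hPdot, Matrix.sub_mulVec, Matrix.smul_mulVec, ← Matrix.mulVec_mulVec,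
      dotProduct_sub, sub_dotProduct, smul_dotProduct,
      dotProduct_smul, hBdot, vecMulVec_mulVec']
    rw [show (A.mulVec x) ⬝ᵥ p = p ⬝ᵥ A.mulVec x from dotProduct_comm _ _]
    rw [show (B.mulVec (C.mulVec x)) ⬝ᵥ p = p ⬝ᵥ B.mulVec y from dotProduct_comm _ _]
    rw [hBdot]
    rw [show D ⬝ᵥ w = w ⬝ᵥ D from dotProduct_comm _ _]
    simp only [← hp, ← hw, smul_eq_mul]
    ring
  simp only [star_trivial] at hq
  rw [hQx] at hq
  -- expand goal
  have hgoal : 2 * (x ⬝ᵥ P.mulVec (A.mulVec x - B.mulVec F + s • B.mulVec D))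
      = 2 * (p ⬝ᵥ A.mulVec x) - 2 * (w ⬝ᵥ F) + 2 * s * (w ⬝ᵥ D) := by
    rw [hPdot]
    simp only [dotProduct_add, dotProduct_sub, dotProduct_smul, hBdot, smul_eq_mul]
    ring
  rw [hgoal]
  -- expand sector condition
  have hsec' : F ⬝ᵥ F - (1 + g) * (F ⬝ᵥ y) + g * (y ⬝ᵥ y) ≤ 0 := by
    have := hsec
    simp only [sub_dotProduct, dotProduct_sub, smul_dotProduct,
      dotProduct_smul, smul_eq_mul, ← hy] at this
    rw [show y ⬝ᵥ F = F ⬝ᵥ y from dotProduct_comm _ _] at this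
    linarith
  -- SOS terms
  have hu : (0:ℝ) ≤ (F + w - ((1 + g) / 2) • y) ⬝ᵥ (F + w - ((1 + g) / 2) • y) :=
    dot_self_nonneg' _
  have hu' : (F + w - ((1 + g) / 2) • y) ⬝ᵥ (F + w - ((1 + g) / 2) • y)
      = F ⬝ᵥ F + w ⬝ᵥ w + ((1 + g) / 2) ^ 2 * (y ⬝ᵥ y) + 2 * (F ⬝ᵥ w)
        - (1 + g) * (F ⬝ᵥ y) - (1 + g) * (w ⬝ᵥ y) := by
    simp only [sub_dotProduct, dotProduct_sub, add_dotProduct,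
      dotProduct_add, smul_dotProduct, dotProduct_smul, smul_eq_mul]
    rw [show w ⬝ᵥ F = F ⬝ᵥ w from dotProduct_comm _ _,
      show y ⬝ᵥ F = F ⬝ᵥ y from dotProduct_comm _ _,
      show y ⬝ᵥ w = w ⬝ᵥ y from dotProduct_comm _ _]
    ring
  rw [hu'] at hu
  have hsos2 : (0:ℝ) ≤ μ * ((w ⬝ᵥ D) - s / μ) ^ 2 := by positivity
  have hFw : w ⬝ᵥ F = F ⬝ᵥ w := dotProduct_comm _ _
  have hexp : μ * ((w ⬝ᵥ D) - s / μ) ^ 2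
      = μ * (w ⬝ᵥ D) ^ 2 - 2 * s * (w ⬝ᵥ D) + s ^ 2 / μ := by
    field_simp
    ring
  rw [hexp] at hsos2
  nlinarith [hq, hsec', hu, hsos2]
end

section
/- Let $n, m$ be natural numbers, $A \in \mathbb{R}^{n\times n}$, $B \in \mathbb{R}^{n\times m}$, $C \in \mathbb{R}^{m\times n}$, $D \in \mathbb{R}^m$, let $P \in \mathbb{R}^{n\times n}$ be symmetric positive semidefinite, let $g \in \mathbb{R}$ and $\mu > 0$, and suppose $\tilde Q = \bar A^T P + P \bar A + \frac{(1-g)^2}{4} C^T C + P B B^T P + \mu\, P B D D^T B^T P$ is negative semidefinite, where $\bar A = A - \frac{1+g}{2}BC$. Let $\tau \ge 0$, and let $x : \mathbb{R} \to \mathbb{R}^n$, $F : \mathbb{R} \to \mathbb{R}^m$, $s : \mathbb{R} \to \mathbb{R}$ be such that $x(0) = 0$ and, for every $t \in [0, \tau]$: $x$ has derivative $x'(t) = A x(t) - B F(t) + B D\, s(t)$ at $t$, the sector condition $(F(t) - gCx(t))\cdot(F(t) - Cx(t)) \le 0$ holds, and $|s(t)| \le 1$. Then $x(t)^T P x(t)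 \le t/\mu$ for every $t \in [0, \tau]$. -/
open Matrix

set_option maxHeartbeats 1000000

private lemma sym_dot {n : ℕ} {P : Matrix (Fin n) (Fin n) ℝ} (hP : P.IsSymm)
    (u v : Fin n → ℝ) : u ⬝ᵥ P.mulVec v = P.mulVec u ⬝ᵥ v := by
  nth_rewrite 1 [← hP.eq]
  rw [Matrix.dotProduct_mulVec, Matrix.vecMul_transpose]

private lemma quad_hasDerivAt {n : ℕ} (P : Matrix (Fin n) (Fin n) ℝ)
    {x : ℝ → Fin n → ℝ} {v : Fin n → ℝ} {t : ℝ}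
    (h : HasDerivAt x v t) :
    HasDerivAt (fun u => x u ⬝ᵥ P.mulVec (x u))
      (v ⬝ᵥ P.mulVec (x t) + x t ⬝ᵥ P.mulVec v) t := by
  have hc : ∀ i, HasDerivAt (fun u => x u i) (v i) t := hasDerivAt_pi.1 h
  have key : HasDerivAt (fun u => ∑ i, x u i * ∑ j, P i j * x u j)
      (∑ i, (v i * ∑ j, P i j * x t j + x t i * ∑ j, P i j * v j)) t := by
    apply HasDerivAt.fun_sum
    intro i _
    exact (hc i).mul (HasDerivAt.fun_sum fun j _ => (hc j).const_mul (P i j))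
  have e1 : (fun u => x u ⬝ᵥ P.mulVec (x u)) = fun u => ∑ i, x u i * ∑ j, P i j * x u j := by
    funext u; simp [dotProduct, Matrix.mulVec]
  have e2 : v ⬝ᵥ P.mulVec (x t) + x t ⬝ᵥ P.mulVec v
      = ∑ i, (v i * ∑ j, P i j * x t j + x t i * ∑ j, P i j * v j) := by
    simp [dotProduct, Matrix.mulVec, Finset.sum_add_distrib]
  rw [e1, e2]
  exact key

private lemma vecMulVec_quad {m : ℕ} (D u : Fin m → ℝ) :
    u ⬝ᵥ (Matrix.vecMulVec D D *ᵥ u) = (u ⬝ᵥ D) ^ 2 := by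
  simp only [Matrix.mulVec, Matrix.vecMulVec_apply, dotProduct, pow_two,
    Finset.sum_mul, Finset.mul_sum]
  apply Finset.sum_congr rfl
  intro i _
  apply Finset.sum_congr rfl
  intro j _
  ring

theorem stmt_10 (n m : ℕ)
    (A P : Matrix (Fin n) (Fin n) ℝ) (B : Matrix (Fin n) (Fin m) ℝ)
    (C : Matrix (Fin m) (Fin n) ℝ) (D : Fin m → ℝ)
    (hP : P.IsSymm) (hPpos : P.PosSemidef)
    (g μ : ℝ) (hμ : 0 < μ)
    (Abar : Matrix (Fin n) (Fin n) ℝ) (hAbar : Abar = A - ((1 + g) / 2) • (B * C))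
    (hQ : (-(Abarᵀ * P + P * Abar + ((1 - g) ^ 2 / 4) • (Cᵀ * C) + P * B * Bᵀ * P +
        μ • (P * B * Matrix.vecMulVec D D * Bᵀ * P))).PosSemidef)
    (τ : ℝ) (hτ : 0 ≤ τ)
    (x : ℝ → Fin n → ℝ) (F : ℝ → Fin m → ℝ) (s : ℝ → ℝ)
    (hx0 : x 0 = 0)
    (hderiv : ∀ t ∈ Set.Icc 0 τ,
      HasDerivAt x (A.mulVec (x t) - B.mulVec (F t) + s t • B.mulVec D) t)
    (hsec : ∀ t ∈ Set.Icc 0 τ,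
      (F t - g • C.mulVec (x t)) ⬝ᵥ (F t - C.mulVec (x t)) ≤ 0)
    (hs : ∀ t ∈ Set.Icc 0 τ, |s t| ≤ 1) :
    ∀ t ∈ Set.Icc 0 τ, x t ⬝ᵥ P.mulVec (x t) ≤ t / μ := by
  set v : ℝ → Fin n → ℝ := fun t => A.mulVec (x t) - B.mulVec (F t) + s t • B.mulVec D with hv
  set f : ℝ → ℝ := fun t => x t ⬝ᵥ P.mulVec (x t) - t / μ with hfdef
  have hF : ∀ t ∈ Set.Icc 0 τ, HasDerivAt f
      (v t ⬝ᵥ P.mulVec (x t) + x t ⬝ᵥ P.mulVec (v t) - 1 / μ) t := by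
    intro t ht
    exact (quad_hasDerivAt P (hderiv t ht)).sub ((hasDerivAt_id t).div_const μ)
  -- pointwise derivative bound
  have hle : ∀ t ∈ Set.Icc 0 τ,
      v t ⬝ᵥ P.mulVec (x t) + x t ⬝ᵥ P.mulVec (v t) - 1 / μ ≤ 0 := by
    intro t ht
    set X := x t with hX
    set w := P.mulVec X with hw
    set y := C.mulVec X with hy
    set z := Bᵀ.mulVec w with hz
    set ξ := F t - ((1 + g) / 2) • y with hξ
    set s0 := s t with hs0
    -- rewrite v t
    have hvt : v t = Abar.mulVec X - B.mulVec ξ + s0 • B.mulVec D := by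
      rw [hv, hAbar, hξ, hy]
      simp only [Matrix.sub_mulVec, Matrix.smul_mulVec, ← Matrix.mulVec_mulVec,
        Matrix.mulVec_sub, Matrix.mulVec_smul]
      abel
    -- scalar abbreviations
    have hdotB : ∀ u : Fin m → ℝ, w ⬝ᵥ B.mulVec u = z ⬝ᵥ u := by
      intro u
      rw [Matrix.dotProduct_mulVec, ← Matrix.mulVec_transpose, hw, ← hz]
    have hXPv : x t ⬝ᵥ P.mulVec (v t) = w ⬝ᵥ v t := sym_dot hP _ _
    have hvPX : v t ⬝ᵥ P.mulVec X = w ⬝ᵥ v t := by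
      rw [dotProduct_comm]
    have hwv : w ⬝ᵥ v t = w ⬝ᵥ Abar.mulVec X - z ⬝ᵥ ξ + s0 * (z ⬝ᵥ D) := by
      rw [hvt, dotProduct_add, dotProduct_sub, dotProduct_smul,
        hdotB, hdotB, smul_eq_mul]
    -- expansion of the quadratic form from hQ
    have hQX : X ⬝ᵥ ((Abarᵀ * P + P * Abar + ((1 - g) ^ 2 / 4) • (Cᵀ * C) + P * B * Bᵀ * P +
        μ • (P * B * Matrix.vecMulVec D D * Bᵀ * P)).mulVec X) ≤ 0 := by
      have h := hQ.dotProduct_mulVec_nonneg X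
      simp only [star_trivial, Matrix.neg_mulVec, dotProduct_neg] at h
      linarith
    have t1 : X ⬝ᵥ Abarᵀ.mulVec (P.mulVec X) = w ⬝ᵥ Abar.mulVec X := by
      rw [Matrix.dotProduct_mulVec, Matrix.vecMul_transpose, dotProduct_comm, ← hw]
    have t2 : X ⬝ᵥ P.mulVec (Abar.mulVec X) = w ⬝ᵥ Abar.mulVec X := by
      rw [sym_dot hP, ← hw]
    have t3 : X ⬝ᵥ Cᵀ.mulVec (C.mulVec X) = y ⬝ᵥ y := by
      rw [Matrix.dotProduct_mulVec, Matrix.vecMul_transpose, ← hy]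
    have t4 : X ⬝ᵥ P.mulVec (B.mulVec (Bᵀ.mulVec (P.mulVec X))) = z ⬝ᵥ z := by
      rw [sym_dot hP, Matrix.dotProduct_mulVec, ← Matrix.mulVec_transpose, ← hw, ← hz]
    have t5 : X ⬝ᵥ P.mulVec (B.mulVec ((Matrix.vecMulVec D D).mulVec
        (Bᵀ.mulVec (P.mulVec X)))) = (z ⬝ᵥ D) ^ 2 := by
      rw [sym_dot hP, Matrix.dotProduct_mulVec, ← Matrix.mulVec_transpose,
        vecMulVec_quad, ← hw, ← hz]
    have hQexp : X ⬝ᵥ ((Abarᵀ * P + P * Abar + ((1 - g) ^ 2 / 4) • (Cᵀ * C) + P * B * Bᵀ * P +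
        μ • (P * B * Matrix.vecMulVec D D * Bᵀ * P)).mulVec X)
        = 2 * (w ⬝ᵥ Abar.mulVec X) + ((1 - g) ^ 2 / 4) * (y ⬝ᵥ y) + z ⬝ᵥ z
          + μ * (z ⬝ᵥ D) ^ 2 := by
      simp only [Matrix.add_mulVec, Matrix.smul_mulVec, dotProduct_add,
        dotProduct_smul, smul_eq_mul, ← Matrix.mulVec_mulVec]
      rw [t1, t2, t3, t4, t5]
      ring
    have hQs : 2 * (w ⬝ᵥ Abar.mulVec X) + ((1 - g) ^ 2 / 4) * (y ⬝ᵥ y) + z ⬝ᵥ z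
        + μ * (z ⬝ᵥ D) ^ 2 ≤ 0 := by rw [← hQexp]; exact hQX
    -- sector condition
    have hsecX : ξ ⬝ᵥ ξ ≤ ((1 - g) ^ 2 / 4) * (y ⬝ᵥ y) := by
      have h := hsec t ht
      rw [← hX, ← hy] at h
      have expand : (F t - g • y) ⬝ᵥ (F t - y)
          = F t ⬝ᵥ F t - (1 + g) * (F t ⬝ᵥ y) + g * (y ⬝ᵥ y) := by
        simp only [sub_dotProduct, dotProduct_sub, smul_dotProduct,
          smul_eq_mul]
        rw [dotProduct_comm y (F t)]
        ring
      have expand2 : ξ ⬝ᵥ ξ = F t ⬝ᵥ F t - (1 + g) * (F t ⬝ᵥ y)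
          + ((1 + g) ^ 2 / 4) * (y ⬝ᵥ y) := by
        rw [hξ]
        simp only [sub_dotProduct, dotProduct_sub, smul_dotProduct,
          dotProduct_smul, smul_eq_mul]
        rw [dotProduct_comm y (F t)]
        ring
      rw [expand] at h
      nlinarith [h, expand2]
    -- Cauchy–Schwarz style bound
    have hcs : 0 ≤ z ⬝ᵥ z + 2 * (z ⬝ᵥ ξ) + ξ ⬝ᵥ ξ := by
      have h : 0 ≤ (z + ξ) ⬝ᵥ (z + ξ) :=
        Finset.sum_nonneg fun i _ => mul_self_nonneg _
      simp only [add_dotProduct, dotProduct_add] at h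
      rw [dotProduct_comm ξ z] at h
      linarith
    have hs2 : s0 ^ 2 ≤ 1 := by
      have h := hs t ht
      rw [← hs0] at h
      nlinarith [abs_nonneg s0, sq_abs s0, h]
    have h3 : 2 * s0 * (z ⬝ᵥ D) * μ ≤ μ ^ 2 * (z ⬝ᵥ D) ^ 2 + s0 ^ 2 := by
      nlinarith [sq_nonneg (μ * (z ⬝ᵥ D) - s0)]
    rw [hXPv, hvPX, hwv, sub_nonpos, ← two_mul, le_div_iff₀ hμ]
    nlinarith [hQs, hsecX, hcs, hs2, h3, hμ, mul_pos hμ hμ]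
  -- monotonicity argument
  have hanti : AntitoneOn f (Set.Icc 0 τ) := by
    apply antitoneOn_of_deriv_nonpos (convex_Icc 0 τ)
    · intro u hu
      exact (hF u hu).continuousAt.continuousWithinAt
    · rw [interior_Icc]
      intro u hu
      exact (hF u (Set.Ioo_subset_Icc_self hu)).differentiableAt.differentiableWithinAt
    · rw [interior_Icc]
      intro u hu
      have hu' := Set.Ioo_subset_Icc_self hu
      rw [(hF u hu').deriv]
      exact hle u hu'
  intro t ht
  have h0 : (0 : ℝ) ∈ Set.Icc 0 τ := Set.left_mem_Icc.2 hτ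
  have key := hanti h0 ht ht.1
  have hf0 : f 0 = 0 := by simp [hfdef, hx0]
  rw [hf0] at key
  simp only [hfdef] at key
  linarith
end

section
/- Let $n, m$ be natural numbers, $A \in \mathbb{R}^{n\times n}$, $B \in \mathbb{R}^{n\times m}$, $C \in \mathbb{R}^{m\times n}$, $D \in \mathbb{R}^m$, let $P \in \mathbb{R}^{n\times n}$ be symmetric positive semidefinite, let $g \in \mathbb{R}$, let $\tau_{cl} > 0$ and $V_{\min} > 0$, and set $\mu = \tau_{cl}/V_{\min}$. Suppose $\tilde Q = \bar A^T P + P \bar A + \frac{(1-g)^2}{4} C^T C + P B B^T P + \mu\, P B D D^T B^T P$ is negative semidefinite, where $\bar A = A - \frac{1+g}{2}BC$. Let $0 \le \tau < \tau_{cl}$, and let $x : \mathbb{R} \to \mathbb{R}^n$, $F : \mathbb{R} \to \mathbb{R}^m$, $s : \mathbb{R} \to \mathbb{R}$ satisfy $x(0) = 0$ and, for every $t \in [0, \tau]$: $x'(t) = A x(t) - B F(t) + B D\, s(t)$, $(F(t) - gCx(t))\cdot(F(t) - Cx(t)) \le 0$, and $|s(t)| \le 1$. Then $x(\tau)^T P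 x(\tau) < V_{\min}$. -/
open Matrix

private lemma hasDerivAt_quadform {n : ℕ} (P : Matrix (Fin n) (Fin n) ℝ)
    (x : ℝ → Fin n → ℝ) (v : Fin n → ℝ) (t : ℝ) (hx : HasDerivAt x v t) :
    HasDerivAt (fun u => x u ⬝ᵥ P.mulVec (x u))
      (v ⬝ᵥ P.mulVec (x t) + x t ⬝ᵥ P.mulVec v) t := by
  have hxi : ∀ i, HasDerivAt (fun u => x u i) (v i) t := fun i => hasDerivAt_pi.1 hx i
  have h : HasDerivAt (fun u => ∑ i, x u i * ∑ j, P i j * x u j)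
      (∑ i, (v i * ∑ j, P i j * x t j + x t i * ∑ j, P i j * v j)) t := by
    apply HasDerivAt.fun_sum
    intro i _
    exact (hxi i).mul (HasDerivAt.fun_sum fun j _ => (hxi j).const_mul (P i j))
  have e1 : (fun u => x u ⬝ᵥ P.mulVec (x u)) = fun u => ∑ i, x u i * ∑ j, P i j * x u j := by
    funext u; simp [dotProduct, Matrix.mulVec]
  have e2 : v ⬝ᵥ P.mulVec (x t) + x t ⬝ᵥ P.mulVec v
      = ∑ i, (v i * ∑ j, P i j * x t j + x t i * ∑ j, P i j * v j) := by
    simp [dotProduct, Matrix.mulVec, Finset.sum_add_distrib]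
  rw [e1, e2]; exact h

theorem stmt_11 (n m : ℕ)
    (A P : Matrix (Fin n) (Fin n) ℝ) (B : Matrix (Fin n) (Fin m) ℝ)
    (C : Matrix (Fin m) (Fin n) ℝ) (D : Fin m → ℝ)
    (hP : P.IsSymm) (hPpos : P.PosSemidef)
    (g : ℝ) (τcl Vmin : ℝ) (hτcl : 0 < τcl) (hVmin : 0 < Vmin)
    (μ : ℝ) (hμ : μ = τcl / Vmin)
    (Abar : Matrix (Fin n) (Fin n) ℝ) (hAbar : Abar = A - ((1 + g) / 2) • (B * C))
    (hQ : (-(Abarᵀ * P + P * Abar + ((1 - g) ^ 2 / 4) • (Cᵀ * C) + P * B * Bᵀ * P +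
        μ • (P * B * Matrix.vecMulVec D D * Bᵀ * P))).PosSemidef)
    (τ : ℝ) (hτ : 0 ≤ τ) (hττ : τ < τcl)
    (x : ℝ → Fin n → ℝ) (F : ℝ → Fin m → ℝ) (s : ℝ → ℝ)
    (hx0 : x 0 = 0)
    (hderiv : ∀ t ∈ Set.Icc 0 τ,
      HasDerivAt x (A.mulVec (x t) - B.mulVec (F t) + s t • B.mulVec D) t)
    (hsec : ∀ t ∈ Set.Icc 0 τ,
      (F t - g • C.mulVec (x t)) ⬝ᵥ (F t - C.mulVec (x t)) ≤ 0)
    (hs : ∀ t ∈ Set.Icc 0 τ, |s t| ≤ 1) :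
    x τ ⬝ᵥ P.mulVec (x τ) < Vmin := by
  have hμpos : 0 < μ := hμ ▸ div_pos hτcl hVmin
  -- symmetry helper
  have hsymm : ∀ u z : Fin n → ℝ, u ⬝ᵥ P.mulVec z = z ⬝ᵥ P.mulVec u := by
    intro u z
    rw [dotProduct_mulVec]
    conv_lhs => rw [← hP, Matrix.vecMul_transpose]
    exact dotProduct_comm _ _
  -- the derivative value of V at time t
  set V : ℝ → ℝ := fun t => x t ⬝ᵥ P.mulVec (x t) with hVdef
  set dV : ℝ → ℝ := fun t =>
    (A.mulVec (x t) - B.mulVec (F t) + s t • B.mulVec D) ⬝ᵥ P.mulVec (x t)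
      + x t ⬝ᵥ P.mulVec (A.mulVec (x t) - B.mulVec (F t) + s t • B.mulVec D) with hdVdef
  have hVd : ∀ t ∈ Set.Icc (0:ℝ) τ, HasDerivAt V (dV t) t := fun t ht =>
    hasDerivAt_quadform P x _ t (hderiv t ht)
  -- bound on the derivative
  have hbound : ∀ t ∈ Set.Icc (0:ℝ) τ, dV t ≤ 1/μ := by
    intro t ht
    set y : Fin n → ℝ := x t with hy
    set q : Fin m → ℝ := Bᵀ.mulVec (P.mulVec y) with hq
    set c : Fin m → ℝ := C.mulVec y with hc
    set w : Fin m → ℝ := F t - ((1 + g) / 2) • c with hw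
    have hB : ∀ z : Fin m → ℝ, y ⬝ᵥ P.mulVec (B.mulVec z) = q ⬝ᵥ z := by
      intro z
      rw [hsymm, dotProduct_comm, dotProduct_mulVec, ← Matrix.mulVec_transpose]
    have hA : ∀ M : Matrix (Fin n) (Fin n) ℝ, y ⬝ᵥ (Mᵀ * P).mulVec y
        = y ⬝ᵥ P.mulVec (M.mulVec y) := by
      intro M
      rw [← Matrix.mulVec_mulVec, dotProduct_mulVec, Matrix.vecMul_transpose,
        hsymm y (M.mulVec y)]
    -- quadratic form inequality from hQ
    have hQy : y ⬝ᵥ P.mulVec (Abar.mulVec y) + y ⬝ᵥ P.mulVec (Abar.mulVec y)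
        + (1 - g) ^ 2 / 4 * (c ⬝ᵥ c) + q ⬝ᵥ q + μ * (q ⬝ᵥ D) ^ 2 ≤ 0 := by
      have h0 := hQ.dotProduct_mulVec_nonneg y
      rw [star_trivial, Matrix.neg_mulVec, dotProduct_neg] at h0
      have h0' : y ⬝ᵥ (Abarᵀ * P + P * Abar + ((1 - g) ^ 2 / 4) • (Cᵀ * C) + P * B * Bᵀ * P +
          μ • (P * B * Matrix.vecMulVec D D * Bᵀ * P)).mulVec y ≤ 0 := by linarith
      rw [Matrix.add_mulVec, Matrix.add_mulVec, Matrix.add_mulVec, Matrix.add_mulVec,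
        Matrix.smul_mulVec, Matrix.smul_mulVec,
        dotProduct_add, dotProduct_add, dotProduct_add, dotProduct_add,
        dotProduct_smul, dotProduct_smul] at h0'
      have e1 : y ⬝ᵥ (Abarᵀ * P).mulVec y = y ⬝ᵥ P.mulVec (Abar.mulVec y) := hA Abar
      have e2 : y ⬝ᵥ (P * Abar).mulVec y = y ⬝ᵥ P.mulVec (Abar.mulVec y) := by
        rw [← Matrix.mulVec_mulVec]
      have e3 : y ⬝ᵥ (Cᵀ * C).mulVec y = c ⬝ᵥ c := by
        rw [← Matrix.mulVec_mulVec, dotProduct_mulVec, Matrix.vecMul_transpose, hc]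
      have e4 : y ⬝ᵥ (P * B * Bᵀ * P).mulVec y = q ⬝ᵥ q := by
        rw [← Matrix.mulVec_mulVec, ← Matrix.mulVec_mulVec, ← Matrix.mulVec_mulVec, hB, hq]
      have e5 : y ⬝ᵥ (P * B * Matrix.vecMulVec D D * Bᵀ * P).mulVec y = (q ⬝ᵥ D) ^ 2 := by
        have hvv : (Matrix.vecMulVec D D).mulVec q = (D ⬝ᵥ q) • D := by
          funext i
          simp [Matrix.mulVec, Matrix.vecMulVec_apply, dotProduct, Finset.mul_sum,
            mul_assoc, mul_comm]
        rw [← Matrix.mulVec_mulVec, ← Matrix.mulVec_mulVec, ← Matrix.mulVec_mulVec,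
          ← Matrix.mulVec_mulVec]
        rw [show Bᵀ.mulVec (P.mulVec y) = q from rfl, hvv, Matrix.mulVec_smul,
          Matrix.mulVec_smul, dotProduct_smul, hB, smul_eq_mul, dotProduct_comm D q, sq]
      rw [e1, e2, e3, e4, e5] at h0'
      simp only [smul_eq_mul] at h0'
      linarith
    -- sector condition
    have hsect : w ⬝ᵥ w ≤ (1 - g) ^ 2 / 4 * (c ⬝ᵥ c) := by
      have h := hsec t ht
      have expand : (F t - g • C.mulVec (x t)) ⬝ᵥ (F t - C.mulVec (x t))
          = w ⬝ᵥ w - (1 - g) ^ 2 / 4 * (c ⬝ᵥ c) := by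
        simp only [hw, hc, hy, dotProduct, Pi.sub_apply, Pi.smul_apply, smul_eq_mul,
          Finset.mul_sum, ← Finset.sum_sub_distrib]
        apply Finset.sum_congr rfl
        intro i _
        ring
      rw [expand] at h
      linarith
    -- derivative expression
    have hvt : A.mulVec y - B.mulVec (F t) + s t • B.mulVec D
        = Abar.mulVec y - B.mulVec w + s t • B.mulVec D := by
      rw [hAbar, Matrix.sub_mulVec, Matrix.smul_mulVec, ← Matrix.mulVec_mulVec,
        hw, Matrix.mulVec_sub, Matrix.mulVec_smul]
      abel
    have hdVt : dV t = 2 * (y ⬝ᵥ P.mulVec (Abar.mulVec y) - q ⬝ᵥ w + s t * (q ⬝ᵥ D)) := by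
      have : y ⬝ᵥ P.mulVec (A.mulVec y - B.mulVec (F t) + s t • B.mulVec D)
          = y ⬝ᵥ P.mulVec (Abar.mulVec y) - q ⬝ᵥ w + s t * (q ⬝ᵥ D) := by
        rw [hvt, Matrix.mulVec_add, Matrix.mulVec_sub, dotProduct_add, dotProduct_sub,
          Matrix.mulVec_smul, dotProduct_smul, hB, hB, smul_eq_mul]
      rw [hdVdef]
      simp only
      rw [hsymm _ (x t), ← hy, this]
      ring
    -- cross term bound
    have hqw : -(2 * (q ⬝ᵥ w)) ≤ q ⬝ᵥ q + w ⬝ᵥ w := by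
      have h0 : (0:ℝ) ≤ (q + w) ⬝ᵥ (q + w) := dot_self_nonneg' _
      have e : (q + w) ⬝ᵥ (q + w) = q ⬝ᵥ q + 2 * (q ⬝ᵥ w) + w ⬝ᵥ w := by
        simp only [dotProduct, Pi.add_apply, Finset.mul_sum, ← Finset.sum_add_distrib]
        apply Finset.sum_congr rfl
        intro i _
        ring
      rw [e] at h0
      linarith
    -- s-term bound
    have hsd : 2 * (s t * (q ⬝ᵥ D)) ≤ μ * (q ⬝ᵥ D) ^ 2 + 1/μ := by
      have hab := abs_le.1 (hs t ht)
      have h1 : μ * (1/μ) = 1 := mul_one_div_cancel hμpos.ne'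
      nlinarith [sq_nonneg (μ * (q ⬝ᵥ D) - s t), hμpos, hab.1, hab.2,
        sq_nonneg (q ⬝ᵥ D)]
    rw [hdVt]
    linarith
  -- integrate the bound
  set W : ℝ → ℝ := fun t => (1/μ) * t - V t with hWdef
  have hW' : ∀ t ∈ Set.Icc (0:ℝ) τ, HasDerivAt W (1/μ - dV t) t := by
    intro t ht
    have h := ((hasDerivAt_id t).const_mul (1/μ)).sub (hVd t ht)
    simp only [mul_one] at h
    exact h
  have hmono : MonotoneOn W (Set.Icc 0 τ) := by
    apply monotoneOn_of_deriv_nonneg (convex_Icc 0 τ)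
    · intro t ht
      exact (hW' t ht).continuousAt.continuousWithinAt
    · intro t ht
      rw [interior_Icc] at ht
      exact ((hW' t (Set.mem_Icc_of_Ioo ht)).differentiableAt).differentiableWithinAt
    · intro t ht
      rw [interior_Icc] at ht
      rw [(hW' t (Set.mem_Icc_of_Ioo ht)).deriv]
      have := hbound t (Set.mem_Icc_of_Ioo ht)
      linarith
  have h0mem : (0:ℝ) ∈ Set.Icc (0:ℝ) τ := ⟨le_refl _, hτ⟩
  have hτmem : τ ∈ Set.Icc (0:ℝ) τ := ⟨hτ, le_refl _⟩
  have hWτ := hmono h0mem hτmem hτ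
  have hW0 : W 0 = 0 := by
    simp [hWdef, hVdef, hx0]
  have hVτ : V τ ≤ (1/μ) * τ := by
    have : W 0 ≤ W τ := hWτ
    rw [hW0] at this
    simp only [hWdef] at this
    linarith
  have h1μ : 1/μ = Vmin / τcl := by
    rw [hμ, one_div_div]
  have : V τ < Vmin := by
    rw [h1μ] at hVτ
    have hlt : Vmin / τcl * τ < Vmin / τcl * τcl :=
      mul_lt_mul_of_pos_left hττ (div_pos hVmin hτcl)
    rw [div_mul_cancel₀ _ hτcl.ne'] at hlt
    linarith
  exact this
end

section
/- Let $n, m$ be natural numbers, $A \in \mathbb{R}^{n\times n}$, $B \in \mathbb{R}^{n\times m}$, $C \in \mathbb{R}^{m\times n}$, let $P \in \mathbb{R}^{n\times n}$ be symmetric, let $g \in \mathbb{R}$, and suppose $\bar A^T P + P \bar A + \frac{(1-g)^2}{4} C^T C + P B B^T P$ is negative semidefinite, where $\bar A = A - \frac{1+g}{2}BC$. Let $a \le b$ be reals and let $x : \mathbb{R} \to \mathbb{R}^n$ and $F : \mathbb{R} \to \mathbb{R}^m$ be such that for every $t \in [a, b]$, $x$ has derivative $x'(t) = A x(t) - B F(t)$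 at $t$ and $(F(t) - gCx(t))\cdot(F(t) - Cx(t)) \le 0$. Then the function $t \mapsto x(t)^T P x(t)$ is monotone nonincreasing on $[a, b]$. -/
open Matrix

lemma key_ineq {n m : ℕ}
    (A P : Matrix (Fin n) (Fin n) ℝ) (B : Matrix (Fin n) (Fin m) ℝ)
    (C : Matrix (Fin m) (Fin n) ℝ) (hP : Pᵀ = P) (g : ℝ)
    (Abar : Matrix (Fin n) (Fin n) ℝ) (hAbar : Abar = A - ((1 + g) / 2) • (B * C))
    (hQ : (-(Abarᵀ * P + P * Abar + ((1 - g) ^ 2 / 4) • (Cᵀ * C) + P * B * Bᵀ * P)).PosSemidef)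
    (X : Fin n → ℝ) (s : Fin m → ℝ)
    (hsec : (s - g • C *ᵥ X) ⬝ᵥ (s - C *ᵥ X) ≤ 0) :
    (A *ᵥ X - B *ᵥ s) ⬝ᵥ P *ᵥ X + X ⬝ᵥ P *ᵥ (A *ᵥ X - B *ᵥ s) ≤ 0 := by
  set r : Fin n → ℝ := P *ᵥ X with hr
  set y : Fin m → ℝ := C *ᵥ X with hy
  set u : Fin m → ℝ := Bᵀ *ᵥ r with hu
  -- X ⬝ᵥ P *ᵥ v = r ⬝ᵥ v
  have hvm : X ᵥ* P = r := by
    have h := vecMul_transpose P X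
    rw [hP] at h
    rw [h, hr]
  have hXP : ∀ v : Fin n → ℝ, X ⬝ᵥ P *ᵥ v = r ⬝ᵥ v := by
    intro v
    rw [dotProduct_mulVec, hvm]
  -- v ⬝ᵥ (B *ᵥ w) = (Bᵀ *ᵥ v) ⬝ᵥ w  for n-vectors v, m-vectors w
  have hBv : ∀ (v : Fin n → ℝ) (w : Fin m → ℝ), v ⬝ᵥ B *ᵥ w = (Bᵀ *ᵥ v) ⬝ᵥ w := by
    intro v w
    rw [dotProduct_mulVec, mulVec_transpose]
  have hCv : ∀ v : Fin n → ℝ, v ⬝ᵥ Cᵀ *ᵥ y = (C *ᵥ v) ⬝ᵥ y := by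
    intro v
    rw [dotProduct_mulVec, vecMul_transpose]
  have hAbarX : Abar *ᵥ X = A *ᵥ X - ((1 + g) / 2) • (B *ᵥ y) := by
    rw [hAbar, sub_mulVec, smul_mulVec, ← mulVec_mulVec, hy]
  have h0 := hQ.dotProduct_mulVec_nonneg X
  have hw0 : (0:ℝ) ≤ (u + s - ((1 + g) / 2) • y) ⬝ᵥ (u + s - ((1 + g) / 2) • y) := by
    apply Finset.sum_nonneg
    intro i _
    exact mul_self_nonneg _
  -- scalar atoms
  have e0 : star X = X := rfl
  rw [e0] at h0
  have eQ : X ⬝ᵥ (-(Abarᵀ * P + P * Abar + ((1 - g) ^ 2 / 4) • (Cᵀ * C) + P * B * Bᵀ * P)) *ᵥ X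
      = -((A *ᵥ X) ⬝ᵥ r - ((1 + g) / 2) * ((B *ᵥ y) ⬝ᵥ r)
          + (r ⬝ᵥ (A *ᵥ X) - ((1 + g) / 2) * (r ⬝ᵥ (B *ᵥ y)))
          + ((1 - g) ^ 2 / 4) * (y ⬝ᵥ y) + u ⬝ᵥ u) := by
    rw [neg_mulVec, dotProduct_neg]
    congr 1
    rw [add_mulVec, add_mulVec, add_mulVec, dotProduct_add, dotProduct_add, dotProduct_add]
    congr 1
    congr 1
    congr 1
    · -- X ⬝ᵥ (Abarᵀ * P) *ᵥ X = (Abar *ᵥ X) ⬝ᵥ r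
      rw [← mulVec_mulVec, ← hr, dotProduct_mulVec, vecMul_transpose, hAbarX,
        sub_dotProduct, smul_dotProduct, smul_eq_mul]
    · -- X ⬝ᵥ (P * Abar) *ᵥ X = r ⬝ᵥ (Abar *ᵥ X)
      rw [← mulVec_mulVec, hXP, hAbarX, dotProduct_sub, dotProduct_smul, smul_eq_mul]
    · rw [smul_mulVec, dotProduct_smul, ← mulVec_mulVec, hCv, smul_eq_mul, hy]
    · -- X ⬝ᵥ (P * B * Bᵀ * P) *ᵥ X = u ⬝ᵥ u
      rw [← mulVec_mulVec, ← mulVec_mulVec, ← mulVec_mulVec, ← hr, hXP, hBv, ← hu]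
  rw [eQ] at h0
  -- expand the w term
  have eW : (u + s - ((1 + g) / 2) • y) ⬝ᵥ (u + s - ((1 + g) / 2) • y)
      = u ⬝ᵥ u + u ⬝ᵥ s + s ⬝ᵥ u + s ⬝ᵥ s
        - ((1 + g) / 2) * (u ⬝ᵥ y) - ((1 + g) / 2) * (s ⬝ᵥ y)
        - ((1 + g) / 2) * (y ⬝ᵥ u) - ((1 + g) / 2) * (y ⬝ᵥ s)
        + ((1 + g) / 2) ^ 2 * (y ⬝ᵥ y) := by
    simp only [sub_dotProduct, dotProduct_sub, add_dotProduct, dotProduct_add,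
      smul_dotProduct, dotProduct_smul, smul_eq_mul]
    ring
  rw [eW] at hw0
  have eS : (s - g • y) ⬝ᵥ (s - y) = s ⬝ᵥ s - s ⬝ᵥ y - g * (y ⬝ᵥ s) + g * (y ⬝ᵥ y) := by
    simp only [sub_dotProduct, dotProduct_sub, smul_dotProduct, smul_eq_mul]
    ring
  rw [hy] at hsec
  rw [eS] at hsec
  -- expand the goal
  have eG : (A *ᵥ X - B *ᵥ s) ⬝ᵥ P *ᵥ X + X ⬝ᵥ P *ᵥ (A *ᵥ X - B *ᵥ s)
      = (A *ᵥ X) ⬝ᵥ r - s ⬝ᵥ u - (B *ᵥ s) ⬝ᵥ r + r ⬝ᵥ (A *ᵥ X) + s ⬝ᵥ u - r ⬝ᵥ (B *ᵥ s) := by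
    rw [hXP, ← hr, sub_dotProduct, dotProduct_sub]
    ring
  rw [eG]
  -- orientation facts
  have c1 : (B *ᵥ y) ⬝ᵥ r = y ⬝ᵥ u := by
    rw [dotProduct_comm, hBv, ← hu, dotProduct_comm]
  have c2 : r ⬝ᵥ (B *ᵥ y) = u ⬝ᵥ y := by rw [hBv, ← hu]
  have c3 : (B *ᵥ s) ⬝ᵥ r = s ⬝ᵥ u := by
    rw [dotProduct_comm, hBv, ← hu, dotProduct_comm]
  have c4 : r ⬝ᵥ (B *ᵥ s) = u ⬝ᵥ s := by rw [hBv, ← hu]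
  have c5 : u ⬝ᵥ s = s ⬝ᵥ u := dotProduct_comm _ _
  have c6 : u ⬝ᵥ y = y ⬝ᵥ u := dotProduct_comm _ _
  have c7 : s ⬝ᵥ y = y ⬝ᵥ s := dotProduct_comm _ _
  rw [c1, c2] at h0
  rw [c3, c4, c5]
  rw [c6] at h0 hw0
  rw [c7] at hw0 hsec
  nlinarith [h0, hw0, hsec]

theorem stmt_12 (n m : ℕ)
    (A P : Matrix (Fin n) (Fin n) ℝ) (B : Matrix (Fin n) (Fin m) ℝ)
    (C : Matrix (Fin m) (Fin n) ℝ) (hP : P.IsSymm) (g : ℝ)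
    (Abar : Matrix (Fin n) (Fin n) ℝ) (hAbar : Abar = A - ((1 + g) / 2) • (B * C))
    (hQ : (-(Abarᵀ * P + P * Abar + ((1 - g) ^ 2 / 4) • (Cᵀ * C) + P * B * Bᵀ * P)).PosSemidef)
    (a b : ℝ) (hab : a ≤ b)
    (x : ℝ → Fin n → ℝ) (F : ℝ → Fin m → ℝ)
    (hderiv : ∀ t ∈ Set.Icc a b,
      HasDerivAt x (A.mulVec (x t) - B.mulVec (F t)) t)
    (hsec : ∀ t ∈ Set.Icc a b,
      (F t - g • C.mulVec (x t)) ⬝ᵥ (F t - C.mulVec (x t)) ≤ 0) :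
    AntitoneOn (fun t => x t ⬝ᵥ P.mulVec (x t)) (Set.Icc a b) := by
  have hV : ∀ t ∈ Set.Icc a b, HasDerivAt (fun τ => x τ ⬝ᵥ P *ᵥ x τ)
      ((A *ᵥ x t - B *ᵥ F t) ⬝ᵥ P *ᵥ x t + x t ⬝ᵥ P *ᵥ (A *ᵥ x t - B *ᵥ F t)) t := by
    intro t ht
    have hx := hderiv t ht
    have hxi : ∀ i, HasDerivAt (fun τ => x τ i) ((A *ᵥ x t - B *ᵥ F t) i) t := fun i =>
      (ContinuousLinearMap.proj (R := ℝ) (φ := fun _ : Fin n => ℝ) i).hasFDerivAt.comp_hasDerivAt t hx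
    have h : HasDerivAt (fun τ => ∑ i, ∑ j, x τ i * (P i j * x τ j))
        (∑ i, ∑ j, ((A *ᵥ x t - B *ᵥ F t) i * (P i j * x t j)
          + x t i * (P i j * (A *ᵥ x t - B *ᵥ F t) j))) t := by
      apply HasDerivAt.fun_sum
      intro i _
      apply HasDerivAt.fun_sum
      intro j _
      exact (hxi i).mul ((hxi j).const_mul (P i j))
    convert h using 1
    · funext τ
      simp [dotProduct, Matrix.mulVec, Finset.mul_sum]
    · simp [dotProduct, Matrix.mulVec, Finset.mul_sum, Finset.sum_add_distrib]
  apply antitoneOn_of_deriv_nonpos (convex_Icc a b)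
  · exact fun t ht => (hV t ht).continuousAt.continuousWithinAt
  · rw [interior_Icc]
    exact fun t ht => ((hV t (Set.Ioo_subset_Icc_self ht)).differentiableAt).differentiableWithinAt
  · intro t ht
    rw [interior_Icc] at ht
    have ht' := Set.Ioo_subset_Icc_self ht
    rw [(hV t ht').deriv]
    exact key_ineq A P B C hP g Abar hAbar hQ (x t) (F t) (hsec t ht')
end
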